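/- arXiv:2209.06689 — 9 statements merged into one kernel-verified Lean document; each statement's English description precedes it below -/
import Mathlib

section
/- Let 0 < ρ ≤ 1/4, 1 ≤ h ≤ 1/(2ρ), and let v be a complex number with |v| = 1 and Re v ≥ T(h) = √(1 + ρ² − 2ρ/h). Then for every real x in the segment S(h) = [x₋, x₊], where x₊ = (√(h² − 2ρh + ρ²h²) + (1 − ρh))/(h+1) and x₋ = (√(h² − 2ρh + ρ²h²) − (1 − ρh))/(h+1), the Poisson kernel satisfies P(v;x) ≥ h. -/
/-!
For `x ≥ 0` the Poisson kernel is increasing in `Re v`, so the worst case is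
`Re v = T`. Since `√(h² - 2ρh + ρ²h²) = h T`, the inequality `h ≤ P` then reads
`(h + 1) x² - 2 h T x + (h - 1) ≤ 0`, a quadratic whose discriminant is `4 (1 - ρh)²`;
its roots are exactly the endpoints `x₋`, `x₊`.
-/

open Real Set

/-- The Poisson kernel `P(v;x)` of the unit disc, for `‖v‖ = 1` and real `x`. -/
noncomputable def discPoissonKernel (v : ℂ) (x : ℝ) : ℝ :=
  (1 - x ^ 2) / (1 - 2 * x * v.re + x ^ 2)

lemma one_sub_two_mul_add_sq_pos {x t : ℝ} (hx0 : 0 ≤ x) (hx1 : x < 1) (ht : t ≤ 1) :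
    0 < 1 - 2 * x * t + x ^ 2 := by
  nlinarith [mul_nonneg hx0 (sub_nonneg.2 ht)]

lemma le_discPoissonKernel_of_quadratic_nonpos {h T x : ℝ} {v : ℂ} (hh : 0 ≤ h) (hv : ‖v‖ = 1)
    (hT : T ≤ v.re) (hx0 : 0 ≤ x) (hx1 : x < 1)
    (hq : (h + 1) * x ^ 2 - 2 * (h * T) * x + (h - 1) ≤ 0) :
    h ≤ discPoissonKernel v x := by
  have hre : v.re ≤ 1 := hv ▸ Complex.re_le_norm v
  rw [discPoissonKernel, le_div_iff₀ (one_sub_two_mul_add_sq_pos hx0 hx1 hre)]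
  nlinarith [mul_nonneg hh (mul_nonneg hx0 (sub_nonneg.2 hT))]

lemma quadratic_nonpos_of_mem_Icc {a b c d x : ℝ} (ha : 0 < a) (hd : d ^ 2 = b ^ 2 - a * c)
    (hx : x ∈ Icc ((b - d) / a) ((b + d) / a)) :
    a * x ^ 2 - 2 * b * x + c ≤ 0 := by
  obtain ⟨hlo, hhi⟩ := hx
  rw [div_le_iff₀ ha] at hlo
  rw [le_div_iff₀ ha] at hhi
  have hsq : (a * x - b) ^ 2 ≤ d ^ 2 := by nlinarith
  nlinarith

theorem stmt3_general (ρ : ℝ) (hρ0 : 0 < ρ) (h : ℝ) (hh1 : 1 ≤ h)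
    (v : ℂ) (hv : ‖v‖ = 1)
    (hRe : Real.sqrt (1 + ρ ^ 2 - 2 * ρ / h) ≤ v.re) (x : ℝ)
    (hx : x ∈ Icc ((Real.sqrt (h ^ 2 - 2 * ρ * h + ρ ^ 2 * h ^ 2) - (1 - ρ * h)) / (h + 1))
                  ((Real.sqrt (h ^ 2 - 2 * ρ * h + ρ ^ 2 * h ^ 2) + (1 - ρ * h)) / (h + 1))) :
    h ≤ (1 - x ^ 2) / (1 - 2 * x * v.re + x ^ 2) := by
  have hh0 : 0 < h := by linarith
  set T := Real.sqrt (1 + ρ ^ 2 - 2 * ρ / h)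
  have hT_sq : T ^ 2 = 1 + ρ ^ 2 - 2 * ρ / h := by
    refine Real.sq_sqrt ?_
    have : 2 * ρ / h ≤ 2 * ρ := div_le_self (by positivity) hh1
    nlinarith [sq_nonneg (1 - ρ)]
  have hs : Real.sqrt (h ^ 2 - 2 * ρ * h + ρ ^ 2 * h ^ 2) = h * T := by
    have : h ^ 2 - 2 * ρ * h + ρ ^ 2 * h ^ 2 = h ^ 2 * (1 + ρ ^ 2 - 2 * ρ / h) := by
      field_simp
      ring
    rw [this, Real.sqrt_mul (sq_nonneg h), Real.sqrt_sq hh0.le]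
  rw [hs] at hx
  have hq : (h + 1) * x ^ 2 - 2 * (h * T) * x + (h - 1) ≤ 0 := by
    refine quadratic_nonpos_of_mem_Icc (by linarith) ?_ hx
    rw [mul_pow, hT_sq]
    field_simp
    ring
  have hx0 : 0 ≤ x := by
    by_contra! hneg
    have hT0 : 0 ≤ T := Real.sqrt_nonneg _
    nlinarith [mul_nonneg (mul_nonneg hh0.le hT0) (neg_nonneg.2 hneg.le)]
  have hT_lt : T < 1 + ρ := by
    rw [Real.sqrt_lt' (by linarith)]
    have : 0 < 2 * ρ / h := by positivity
    nlinarith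
  have hx1 : x < 1 := by
    have := hx.2
    rw [le_div_iff₀ (by linarith)] at this
    nlinarith
  exact le_discPoissonKernel_of_quadratic_nonpos hh0.le hv hRe hx0 hx1 hq

theorem stmt3 (ρ : ℝ) (hρ0 : 0 < ρ) (hρ1 : ρ ≤ 1 / 4) (h : ℝ) (hh1 : 1 ≤ h)
    (hh2 : h ≤ 1 / (2 * ρ)) (v : ℂ) (hv : ‖v‖ = 1)
    (hRe : Real.sqrt (1 + ρ ^ 2 - 2 * ρ / h) ≤ v.re) (x : ℝ)
    (hx : x ∈ Icc ((Real.sqrt (h ^ 2 - 2 * ρ * h + ρ ^ 2 * h ^ 2) - (1 - ρ * h)) / (h + 1))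
                  ((Real.sqrt (h ^ 2 - 2 * ρ * h + ρ ^ 2 * h ^ 2) + (1 - ρ * h)) / (h + 1))) :
    h ≤ (1 - x ^ 2) / (1 - 2 * x * v.re + x ^ 2) :=
  stmt3_general ρ hρ0 h hh1 v hv hRe x hx
end

section
/- Let 0 < ρ ≤ 1/4. For every h with 1 ≤ h ≤ 1/(2ρ), the segment S(h) = [x₋(h), x₊(h)] with x₊(h) = (√(h² − 2ρh + ρ²h²) + (1 − ρh))/(h+1) and x₋(h) = (√(h² − 2ρh + ρ²h²) − (1 − ρh))/(h+1) contains the fixed segment S* = [(√(1 − 3ρ²) − ρ)/(1 + 2ρ), 1 − ρ], and the length of S* is greater than 5ρ/4. -/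
open Real Set

set_option maxHeartbeats 1000000 in
theorem stmt4 (ρ : ℝ) (hρ0 : 0 < ρ) (hρ1 : ρ ≤ 1 / 4) :
    (∀ h ∈ Icc (1 : ℝ) (1 / (2 * ρ)),
      Icc ((Real.sqrt (1 - 3 * ρ ^ 2) - ρ) / (1 + 2 * ρ)) (1 - ρ) ⊆
        Icc ((Real.sqrt (h ^ 2 - 2 * ρ * h + ρ ^ 2 * h ^ 2) - (1 - ρ * h)) / (h + 1))
            ((Real.sqrt (h ^ 2 - 2 * ρ * h + ρ ^ 2 * h ^ 2) + (1 - ρ * h)) / (h + 1))) ∧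
    (1 - ρ) - (Real.sqrt (1 - 3 * ρ ^ 2) - ρ) / (1 + 2 * ρ) > 5 * ρ / 4 := by
  have h2ρ : (0:ℝ) < 1 + 2 * ρ := by linarith
  set s := Real.sqrt (1 - 3 * ρ ^ 2) with hs
  have hs0 : 0 ≤ s := Real.sqrt_nonneg _
  have hs2 : s ^ 2 = 1 - 3 * ρ ^ 2 := Real.sq_sqrt (by nlinarith)
  have hsρ : ρ ≤ s := by nlinarith [sq_nonneg (s - ρ), sq_nonneg (s + ρ)]
  constructor
  · rintro h ⟨hh1, hh2⟩
    have hρh : 2 * ρ * h ≤ 1 := by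
      rw [le_div_iff₀ (by positivity)] at hh2; nlinarith
    have hAnn : 0 ≤ h ^ 2 - 2 * ρ * h + ρ ^ 2 * h ^ 2 := by nlinarith
    set A := Real.sqrt (h ^ 2 - 2 * ρ * h + ρ ^ 2 * h ^ 2) with hA
    have hA0 : 0 ≤ A := Real.sqrt_nonneg _
    have hA2 : A ^ 2 = h ^ 2 - 2 * ρ * h + ρ ^ 2 * h ^ 2 := Real.sq_sqrt hAnn
    have hh0 : (0:ℝ) < h + 1 := by linarith
    apply Icc_subset_Icc
    · rw [div_le_div_iff₀ hh0 h2ρ]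
      have hg1 : 0 ≤ 4 * (s + 1 - 2 * ρ ^ 2) * (s - ρ) := by nlinarith
      have hC2 : 0 ≤ 4 * ρ + 4 * ρ ^ 2 - 4 * ρ ^ 3 + 4 * s * ρ * (1 + ρ) := by nlinarith
      have key : 2 * ρ * (1 - 2 * ρ) *
          (((s - ρ) * (h + 1) + (1 - ρ * h) * (1 + 2 * ρ)) ^ 2 - ((1 + 2 * ρ) * A) ^ 2)
          = 2 * ρ * (1 - 2 * ρ * h) * (4 * (s + 1 - 2 * ρ ^ 2) * (s - ρ))
            + (h - 1) * (1 - 2 * ρ * h) * (1 - 2 * ρ) *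
              (4 * ρ + 4 * ρ ^ 2 - 4 * ρ ^ 3 + 4 * s * ρ * (1 + ρ)) := by
        linear_combination ((-2)*ρ - 4*ρ^2 + 8*ρ^3 + 16*ρ^4) * hA2 +
          (2*ρ*h^2 + 4*ρ*h - 6*ρ - 4*ρ^2*h^2 + 8*ρ^2*h - 4*ρ^2) * hs2
      have hpos : (0:ℝ) < 2 * ρ * (1 - 2 * ρ) := by nlinarith
      have hX : 0 ≤ ((s - ρ) * (h + 1) + (1 - ρ * h) * (1 + 2 * ρ)) ^ 2 - ((1 + 2 * ρ) * A) ^ 2 := by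
        have hrhs : 0 ≤ 2 * ρ * (1 - 2 * ρ * h) * (4 * (s + 1 - 2 * ρ ^ 2) * (s - ρ))
            + (h - 1) * (1 - 2 * ρ * h) * (1 - 2 * ρ) *
              (4 * ρ + 4 * ρ ^ 2 - 4 * ρ ^ 3 + 4 * s * ρ * (1 + ρ)) := by
          have t1 : 0 ≤ 2 * ρ * (1 - 2 * ρ * h) := by nlinarith
          have t2 : 0 ≤ (h - 1) * (1 - 2 * ρ * h) * (1 - 2 * ρ) := by
            apply mul_nonneg (mul_nonneg (by linarith) (by linarith)) (by linarith)
          exact add_nonneg (mul_nonneg t1 hg1) (mul_nonneg t2 hC2)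
        nlinarith [key, hrhs, hpos]
      have hR : 0 ≤ (s - ρ) * (h + 1) + (1 - ρ * h) * (1 + 2 * ρ) := by nlinarith
      nlinarith [hX, hR, mul_nonneg hA0 h2ρ.le]
    · rw [le_div_iff₀ hh0]
      have hsq : (h - ρ) ^ 2 ≤ h ^ 2 - 2 * ρ * h + ρ ^ 2 * h ^ 2 := by
        nlinarith [mul_nonneg (mul_nonneg (by linarith : (0:ℝ) ≤ h - 1) (by linarith : (0:ℝ) ≤ h + 1)) (sq_nonneg ρ)]
      have hAge : h - ρ ≤ A := by
        have := Real.sqrt_le_sqrt hsq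
        rwa [Real.sqrt_sq (by linarith)] at this
      nlinarith
  · have hB : (0:ℝ) < 1 + 3 * ρ / 4 - 9 * ρ ^ 2 / 2 := by nlinarith
    have key : s < 1 + 3 * ρ / 4 - 9 * ρ ^ 2 / 2 := by
      nlinarith [mul_nonneg (mul_nonneg (by linarith : (0:ℝ) ≤ 1/4 - ρ) (by linarith : (0:ℝ) ≤ 1/4 - ρ)) hρ0.le,
        mul_pos hρ0 hρ0, mul_nonneg (by linarith : (0:ℝ) ≤ 1/4 - ρ) hρ0.le,
        mul_nonneg (mul_nonneg (by linarith : (0:ℝ) ≤ 1/4 - ρ) hρ0.le) hρ0.le]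
    rw [gt_iff_lt, show (1 - ρ) - (s - ρ) / (1 + 2 * ρ)
        = ((1 - ρ) * (1 + 2 * ρ) - (s - ρ)) / (1 + 2 * ρ) by field_simp,
      lt_div_iff₀ h2ρ]
    nlinarith
end

section
/- Let 0 < ρ ≤ 1/4. The function x₋(h) = (√(h² − 2ρh + ρ²h²) − (1 − ρh))/(h+1) is increasing on [1, 1/(2ρ)], so that x₋(h) ≤ x₋(1/(2ρ)) = (√(1 − 3ρ²) − ρ)/(1 + 2ρ) for all h in [1, 1/(2ρ)]. -/
open Real Set

theorem stmt5 (ρ : ℝ) (hρ0 : 0 < ρ) (hρ1 : ρ ≤ 1 / 4) :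
    MonotoneOn (fun h : ℝ =>
        (Real.sqrt (h ^ 2 - 2 * ρ * h + ρ ^ 2 * h ^ 2) - (1 - ρ * h)) / (h + 1))
      (Icc 1 (1 / (2 * ρ))) ∧
    (∀ h ∈ Icc (1 : ℝ) (1 / (2 * ρ)),
      (Real.sqrt (h ^ 2 - 2 * ρ * h + ρ ^ 2 * h ^ 2) - (1 - ρ * h)) / (h + 1) ≤
        (Real.sqrt (1 - 3 * ρ ^ 2) - ρ) / (1 + 2 * ρ)) := by
  have h2ρ : (0:ℝ) < 2 * ρ := by linarith
  -- basic facts for h in the interval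
  have hρh : ∀ h ∈ Icc (1:ℝ) (1 / (2 * ρ)), ρ * h ≤ 1 / 2 := by
    intro h hh
    have := (le_div_iff₀ h2ρ).mp hh.2
    nlinarith
  have hg : ∀ h ∈ Icc (1:ℝ) (1 / (2 * ρ)), 0 ≤ h ^ 2 - 2 * ρ * h + ρ ^ 2 * h ^ 2 := by
    intro h hh
    have h1 : (1:ℝ) ≤ h := hh.1
    have h2 := hρh h hh
    nlinarith [sq_nonneg (ρ * h)]
  -- rationalized form
  have hf : ∀ h ∈ Icc (1:ℝ) (1 / (2 * ρ)),
      (Real.sqrt (h ^ 2 - 2 * ρ * h + ρ ^ 2 * h ^ 2) - (1 - ρ * h)) / (h + 1)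
        = (h - 1) / (Real.sqrt (h ^ 2 - 2 * ρ * h + ρ ^ 2 * h ^ 2) + (1 - ρ * h)) := by
    intro h hh
    have h1 : (1:ℝ) ≤ h := hh.1
    have h2 := hρh h hh
    have hs := Real.sq_sqrt (hg h hh)
    have hd : 0 < Real.sqrt (h ^ 2 - 2 * ρ * h + ρ ^ 2 * h ^ 2) + (1 - ρ * h) := by
      have := Real.sqrt_nonneg (h ^ 2 - 2 * ρ * h + ρ ^ 2 * h ^ 2)
      linarith
    rw [div_eq_div_iff (by positivity : (0:ℝ) < h + 1).ne' hd.ne']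
    linear_combination hs
  have key : MonotoneOn (fun h : ℝ =>
        (Real.sqrt (h ^ 2 - 2 * ρ * h + ρ ^ 2 * h ^ 2) - (1 - ρ * h)) / (h + 1))
      (Icc 1 (1 / (2 * ρ))) := by
    intro a ha b hb hab
    simp only
    rw [hf a ha, hf b hb]
    have ha1 : (1:ℝ) ≤ a := ha.1
    have hb1 : (1:ℝ) ≤ b := hb.1
    have hρa := hρh a ha
    have hρb := hρh b hb
    have hga := hg a ha
    have hgb := hg b hb
    have hda : 0 < Real.sqrt (a ^ 2 - 2 * ρ * a + ρ ^ 2 * a ^ 2) + (1 - ρ * a) := by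
      have := Real.sqrt_nonneg (a ^ 2 - 2 * ρ * a + ρ ^ 2 * a ^ 2); linarith
    have hdb : 0 < Real.sqrt (b ^ 2 - 2 * ρ * b + ρ ^ 2 * b ^ 2) + (1 - ρ * b) := by
      have := Real.sqrt_nonneg (b ^ 2 - 2 * ρ * b + ρ ^ 2 * b ^ 2); linarith
    rw [div_le_div_iff₀ hda hdb]
    -- key square comparison : (a-1)^2 * g(b) ≤ (b-1)^2 * g(a)
    have hsq : (a - 1) ^ 2 * (b ^ 2 - 2 * ρ * b + ρ ^ 2 * b ^ 2)
        ≤ (b - 1) ^ 2 * (a ^ 2 - 2 * ρ * a + ρ ^ 2 * a ^ 2) := by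
      have t1 : 0 ≤ (b - a) * ((1 - 2*ρ) * (a*b - 1)) := by
        have : (0:ℝ) ≤ a*b - 1 := by nlinarith
        have h1 : (0:ℝ) ≤ 1 - 2*ρ := by linarith
        have hba : (0:ℝ) ≤ b - a := by linarith
        positivity
      have t2 : 0 ≤ (b - a) * ((a - 1) * (b - 1)) := by
        have hba : (0:ℝ) ≤ b - a := by linarith
        have : (0:ℝ) ≤ (a-1)*(b-1) := by nlinarith
        positivity
      have t3 : 0 ≤ (b - a) * (ρ^2 * (2*a*b - a - b)) := by
        have hba : (0:ℝ) ≤ b - a := by linarith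
        have : (0:ℝ) ≤ 2*a*b - a - b := by nlinarith
        positivity
      nlinarith [t1, t2, t3]
    have hkey : (a - 1) * Real.sqrt (b ^ 2 - 2 * ρ * b + ρ ^ 2 * b ^ 2)
        ≤ (b - 1) * Real.sqrt (a ^ 2 - 2 * ρ * a + ρ ^ 2 * a ^ 2) := by
      have := Real.sqrt_le_sqrt hsq
      rwa [Real.sqrt_mul (by positivity), Real.sqrt_mul (by positivity),
        Real.sqrt_sq (by linarith), Real.sqrt_sq (by linarith)] at this
    nlinarith [hkey]
  refine ⟨key, ?_⟩
  intro h hh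
  have htop : (1 / (2 * ρ)) ∈ Icc (1:ℝ) (1 / (2 * ρ)) := by
    constructor
    · rw [le_div_iff₀ h2ρ]; linarith
    · exact le_refl _
  have hmono := key hh htop hh.2
  refine hmono.trans_eq ?_
  simp only
  have h3ρ : (0:ℝ) ≤ 1 - 3 * ρ ^ 2 := by nlinarith
  have e1 : (1 / (2 * ρ)) ^ 2 - 2 * ρ * (1 / (2 * ρ)) + ρ ^ 2 * (1 / (2 * ρ)) ^ 2
      = (1 - 3 * ρ ^ 2) / (2 * ρ) ^ 2 := by
    field_simp; ring
  rw [e1, Real.sqrt_div h3ρ, Real.sqrt_sq (by linarith)]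
  have : ρ * (1 / (2 * ρ)) = 1/2 := by field_simp
  rw [this]
  field_simp
  ring
end

section
/- Let 0 < ρ ≤ 1/4. Then for all h with 1 ≤ h ≤ 1/(2ρ), one has x₊(h) ≥ 1 − ρ, where x₊(h) = (√(h² − 2ρh + ρ²h²) + (1 − ρh))/(h+1). Moreover (1 − ρ) − (√(1 − 3ρ²) − ρ)/(1 + 2ρ) > ρ(4 − ρ)/(2 + 4ρ) ≥ 5ρ/4. -/
open Real Set

theorem stmt6 (ρ : ℝ) (hρ0 : 0 < ρ) (hρ1 : ρ ≤ 1 / 4) :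
    (∀ h ∈ Icc (1 : ℝ) (1 / (2 * ρ)),
      1 - ρ ≤ (Real.sqrt (h ^ 2 - 2 * ρ * h + ρ ^ 2 * h ^ 2) + (1 - ρ * h)) / (h + 1)) ∧
    (1 - ρ) - (Real.sqrt (1 - 3 * ρ ^ 2) - ρ) / (1 + 2 * ρ) > ρ * (4 - ρ) / (2 + 4 * ρ) ∧
    ρ * (4 - ρ) / (2 + 4 * ρ) ≥ 5 * ρ / 4 := by
  refine ⟨?_, ?_, ?_⟩
  · intro h hh
    obtain ⟨h1, _⟩ := hh
    have hpos : (0:ℝ) < h + 1 := by linarith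
    rw [le_div_iff₀ hpos]
    have hρh : ρ ≤ h := by nlinarith
    have key : h - ρ ≤ Real.sqrt (h ^ 2 - 2 * ρ * h + ρ ^ 2 * h ^ 2) := by
      have := Real.sqrt_le_sqrt
        (show (h - ρ)^2 ≤ h ^ 2 - 2 * ρ * h + ρ ^ 2 * h ^ 2 by nlinarith [mul_nonneg (by nlinarith : (0:ℝ) ≤ ρ*h - ρ) (by nlinarith : (0:ℝ) ≤ ρ*h + ρ)])
      rwa [Real.sqrt_sq (by linarith)] at this
    nlinarith
  · have hden : (0:ℝ) < 1 + 2 * ρ := by linarith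
    have h1 : Real.sqrt (1 - 3 * ρ ^ 2) < 1 - (3/2) * ρ ^ 2 := by
      rw [show (1 : ℝ) - (3/2) * ρ^2 = Real.sqrt ((1 - (3/2) * ρ^2)^2) from
        (Real.sqrt_sq (by nlinarith)).symm]
      apply Real.sqrt_lt_sqrt (by nlinarith)
      nlinarith [pow_pos hρ0 4]
    have h2 : (Real.sqrt (1 - 3 * ρ ^ 2) - ρ) / (1 + 2 * ρ)
        < (1 - (3/2) * ρ^2 - ρ) / (1 + 2 * ρ) := by
      apply div_lt_div_of_pos_right (by linarith) hden
    have h3 : ρ * (4 - ρ) / (2 + 4 * ρ) = (1 - ρ) - (1 - (3/2) * ρ^2 - ρ) / (1 + 2 * ρ) := by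
      field_simp
      ring
    linarith
  · rw [ge_iff_le, div_le_div_iff₀ (by norm_num) (by linarith)]
    nlinarith
end

section
/- Let 0 < ρ ≤ 1/4, let h satisfy 1 ≤ h ≤ 1/(2ρ), and let v be a complex number with |v| = 1 and |Re v| < T(h) = √(1 + ρ² − 2ρ/h). Then for any real s with 0 < s < 4h/(3ρ) and any real x with 1 − 3sρ/(4h) ≤ |x| ≤ 1, the Poisson kernel satisfies P(v;x) < s. -/
/-!
Write `c = Re v`. The denominator of the Poisson kernel is `(x - c)² + (1 - c²) ≥ 1 - c²`, and the
hypothesis on `|c|` together with `2ρh ≤ 1` gives `1 - c² > 2ρ/h - ρ² ≥ 3ρ/(2h)`. The numerator is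
`1 - x² ≤ 2(1 - |x|) ≤ 3sρ/(2h)`, so the quotient is below `s`.
-/

open Real Set

lemma one_sub_sq_le_two_mul_one_sub_abs {x : ℝ} (hx : |x| ≤ 1) : 1 - x ^ 2 ≤ 2 * (1 - |x|) := by
  nlinarith [sq_abs x, abs_nonneg x]

lemma poisson_lt_of_lt_one_sub_sq {c x s δ : ℝ} (hδ0 : 0 ≤ δ) (hδ : δ < 1 - c ^ 2) (hs : 0 < s)
    (hx : |x| ≤ 1) (hxδ : 2 * (1 - |x|) ≤ s * δ) :
    (1 - x ^ 2) / (1 - 2 * x * c + x ^ 2) < s := by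
  have hden : δ < 1 - 2 * x * c + x ^ 2 := by nlinarith [sq_nonneg (x - c)]
  rw [div_lt_iff₀ (by linarith)]
  calc 1 - x ^ 2 ≤ s * δ := (one_sub_sq_le_two_mul_one_sub_abs hx).trans hxδ
    _ < s * (1 - 2 * x * c + x ^ 2) := mul_lt_mul_of_pos_left hden hs

lemma lt_one_sub_sq_of_abs_lt_sqrt {ρ h c : ℝ} (hρ : 0 < ρ) (hh : 0 < h) (hρh : 2 * ρ * h ≤ 1)
    (hc : |c| < √(1 + ρ ^ 2 - 2 * ρ / h)) :
    3 * ρ / (2 * h) < 1 - c ^ 2 := by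
  have hc2 : c ^ 2 < 1 + ρ ^ 2 - 2 * ρ / h := by
    rw [← sq_abs]
    exact (Real.lt_sqrt (abs_nonneg c)).mp hc
  have hgap : 2 * ρ / h - ρ ^ 2 - 3 * ρ / (2 * h) = ρ / (2 * h) * (1 - 2 * ρ * h) := by
    field_simp
    ring
  have : 0 ≤ ρ / (2 * h) * (1 - 2 * ρ * h) := by
    apply mul_nonneg <;> [positivity; linarith]
  linarith

theorem stmt7_general (ρ : ℝ) (hρ0 : 0 < ρ) (h : ℝ) (hh1 : 1 ≤ h)
    (hh2 : h ≤ 1 / (2 * ρ)) (v : ℂ)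
    (hRe : |v.re| < Real.sqrt (1 + ρ ^ 2 - 2 * ρ / h)) (s : ℝ) (hs0 : 0 < s)
    (x : ℝ) (hx1 : 1 - 3 * s * ρ / (4 * h) ≤ |x|)
    (hx2 : |x| ≤ 1) :
    (1 - x ^ 2) / (1 - 2 * x * v.re + x ^ 2) < s := by
  have hh0 : 0 < h := by linarith
  have hρh : 2 * ρ * h ≤ 1 := by rwa [le_div_iff₀ (by positivity), mul_comm] at hh2
  refine poisson_lt_of_lt_one_sub_sq (by positivity)
    (lt_one_sub_sq_of_abs_lt_sqrt hρ0 hh0 hρh hRe) hs0 hx2 ?_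
  have : s * (3 * ρ / (2 * h)) = 2 * (3 * s * ρ / (4 * h)) := by
    field_simp
    ring
  linarith

theorem stmt7 (ρ : ℝ) (hρ0 : 0 < ρ) (hρ1 : ρ ≤ 1 / 4) (h : ℝ) (hh1 : 1 ≤ h)
    (hh2 : h ≤ 1 / (2 * ρ)) (v : ℂ) (hv : ‖v‖ = 1)
    (hRe : |v.re| < Real.sqrt (1 + ρ ^ 2 - 2 * ρ / h)) (s : ℝ) (hs0 : 0 < s)
    (hs1 : s < 4 * h / (3 * ρ)) (x : ℝ) (hx1 : 1 - 3 * s * ρ / (4 * h) ≤ |x|)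
    (hx2 : |x| ≤ 1) :
    (1 - x ^ 2) / (1 - 2 * x * v.re + x ^ 2) < s :=
  stmt7_general ρ hρ0 h hh1 hh2 v hRe s hs0 x hx1 hx2
end

section
/- For every positive integer n, every choice of points z_1,...,z_n on the unit circle, and every δ with 0 < δ < 1/2, the Lebesgue measure of the set E = {x ∈ [−1,1] : |Re(x·g_n(x))| ≥ δn} is at least K(δ)/n, where K(δ) = (3/32)·(1 − 2δ)/(1 + 2δ)² and g_n(x) = ∑_{k=1}^n 1/(x − z_k). -/
/-!
For `|x| < 1` and `|c| = 1` one has `Re (x / (x - c)) = 1/2 - P(x, c)/2`, where `P` is the Poisson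
kernel of the unit disc, so `Re (x gₙ(x)) = n/2 - (∑ₖ P(x, zₖ))/2`. With `u = 3/(4(1+2δ)n)` and
`ρ = (1-2δ)/(8(1+2δ))` it therefore suffices to find an interval of length `ρu` on which the
Poisson sum is either `≥ 1/u ≥ (1+2δ)n` or `≤ 6ρ/u = (1-2δ)n`.

Order the zeros by their chord `rⱼ = |1 - zⱼ|`. If some `rⱼ ≤ u(j+1-ρ)`, then for `1 - x` just
above `rⱼ` the `j+1` nearest zeros each contribute at least `1/(1-x) ≥ 1/((j+1)u)`. Otherwise
`rⱼ > u(j+1-ρ)` for every `j`, and on `[1-ρu, 1)` the bound `P(x, zⱼ) ≤ 2(1-x)/(x rⱼ²)` together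
with `∑ⱼ 1/(j+a)² ≤ 1/(a-1/2)` makes the sum small.
-/

open MeasureTheory Set

lemma re_mul_one_div_sub {w c : ℂ} (h : w ≠ c) :
    (w * (1 / (w - c))).re = 1 / 2 - poissonKernel 0 w c / 2 := by
  have h₁ : w - c ≠ 0 := sub_ne_zero.2 h
  have h₂ : c - w ≠ 0 := sub_ne_zero.2 h.symm
  have hw : w * (1 / (w - c)) = 1 / 2 - herglotzRieszKernel 0 w c / 2 := by
    rw [herglotzRieszKernel_def, sub_zero, sub_zero, ← neg_sub w c, div_neg]
    field_simp
    ring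
  rw [hw, poissonKernel_eq_re_herglotzRieszKernel, Function.comp_apply]
  simp

lemma re_ofReal_mul_sum_one_div_sub {n : ℕ} {z : Fin n → ℂ} (hz : ∀ k, ‖z k‖ = 1) {x : ℝ}
    (hx : x ∈ Ioo (-1) 1) :
    ((x : ℂ) * ∑ k, 1 / ((x : ℂ) - z k)).re = n / 2 - (∑ k, poissonKernel 0 x (z k)) / 2 := by
  have hne : ∀ k, (x : ℂ) ≠ z k := fun k h => by
    have := hz k
    rw [← h, Complex.norm_real, Real.norm_eq_abs] at this
    exact (abs_lt.2 hx).ne this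
  simp only [Finset.mul_sum, Complex.re_sum, re_mul_one_div_sub (hne _), Finset.sum_sub_distrib,
    Finset.sum_div, Finset.sum_const, Finset.card_univ, Fintype.card_fin, nsmul_eq_mul]
  ring

lemma poissonKernel_zero_ofReal {c : ℂ} (hc : ‖c‖ = 1) (x : ℝ) :
    poissonKernel 0 x c = (1 - x ^ 2) / ((1 - x) ^ 2 + x * ‖1 - c‖ ^ 2) := by
  have hc2 : c.re ^ 2 + c.im ^ 2 = 1 := by
    have h := Complex.sq_norm c
    rw [hc, Complex.normSq_apply] at h
    linear_combination -h
  rw [poissonKernel_def]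
  simp only [sub_zero, hc, Complex.norm_real, Real.norm_eq_abs, sq_abs, Complex.sq_norm,
    Complex.normSq_apply, Complex.sub_re, Complex.sub_im, Complex.ofReal_re, Complex.ofReal_im,
    Complex.one_re, Complex.one_im]
  congr 1
  · ring
  · linear_combination (1 - x) * hc2

lemma poissonKernel_nonneg {w c : ℂ} (h : ‖w‖ ≤ ‖c‖) : 0 ≤ poissonKernel 0 w c := by
  rw [poissonKernel_def]
  simp only [sub_zero]
  exact div_nonneg (by nlinarith [norm_nonneg w]) (by positivity)

lemma inv_one_sub_le_poissonKernel {c : ℂ} (hc : ‖c‖ = 1) {x : ℝ} (hx₀ : 0 ≤ x) (hx₁ : x < 1)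
    (hcx : ‖1 - c‖ ≤ 1 - x) : 1 / (1 - x) ≤ poissonKernel 0 x c := by
  have hr2 : ‖1 - c‖ ^ 2 ≤ (1 - x) ^ 2 := pow_le_pow_left₀ (norm_nonneg _) hcx 2
  have hpos : 0 < 1 - x := by linarith
  rw [poissonKernel_zero_ofReal hc, div_le_div_iff₀ hpos (by positivity)]
  nlinarith [mul_le_mul_of_nonneg_left hr2 hx₀]

lemma poissonKernel_le {c : ℂ} (hc : ‖c‖ = 1) (hc₁ : c ≠ 1) {x : ℝ} (hx₀ : 0 < x) (hx₁ : x ≤ 1) :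
    poissonKernel 0 x c ≤ 2 * (1 - x) / (x * ‖1 - c‖ ^ 2) := by
  have : 0 < x * ‖1 - c‖ ^ 2 := by
    have : 0 < ‖1 - c‖ := norm_pos_iff.2 (sub_ne_zero.2 hc₁.symm)
    positivity
  rw [poissonKernel_zero_ofReal hc, div_le_div_iff₀ (by positivity) this]
  nlinarith [sq_nonneg (1 - x), mul_nonneg (sub_nonneg.2 hx₁) this.le]

lemma sum_range_one_div_add_sq_le {a : ℝ} (ha : 1 / 2 < a) (m : ℕ) :
    ∑ j ∈ Finset.range m, 1 / ((j : ℝ) + a) ^ 2 ≤ 1 / (a - 1 / 2) := by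
  set f : ℕ → ℝ := fun j => 1 / ((j : ℝ) + a - 1 / 2)
  have hf : ∀ j : ℕ, 0 < (j : ℝ) + a - 1 / 2 := fun j => by linarith [j.cast_nonneg (α := ℝ)]
  -- `(j + a)² ≥ (j + a - 1/2) (j + a + 1/2)` makes the sum telescope
  have hstep : ∀ j ∈ Finset.range m, 1 / ((j : ℝ) + a) ^ 2 ≤ f j - f (j + 1) := by
    intro j _
    have hj := hf j
    simp only [f, Nat.cast_succ]
    rw [div_sub_div _ _ (by linarith) (by linarith), div_le_div_iff₀ (by positivity)
      (by nlinarith)]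
    nlinarith
  calc ∑ j ∈ Finset.range m, 1 / ((j : ℝ) + a) ^ 2
      ≤ ∑ j ∈ Finset.range m, (f j - f (j + 1)) := Finset.sum_le_sum hstep
    _ = f 0 - f m := Finset.sum_range_sub' f m
    _ ≤ f 0 := sub_le_self _ (one_div_pos.2 (hf m)).le
    _ = 1 / (a - 1 / 2) := by simp [f]

lemma one_div_le_sum_poissonKernel {n : ℕ} {z : Fin n → ℂ} (hz : ∀ k, ‖z k‖ = 1)
    (hmono : Monotone fun k => ‖1 - z k‖) {u ρ : ℝ} (hu : 0 < u) (hnu : n * u ≤ 1) (hρ : ρ < 1)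
    (j : Fin n) (hj : ‖1 - z j‖ ≤ u * (j + 1 - ρ)) {x : ℝ}
    (hx : x ∈ Ico (1 - (j + 1) * u) (1 - (j + 1) * u + ρ * u)) :
    x ∈ Ioo (-1) 1 ∧ 1 / u ≤ ∑ k, poissonKernel 0 x (z k) := by
  obtain ⟨hx₁, hx₂⟩ := hx
  set m : ℝ := (j : ℝ) + 1
  have hm₁ : 1 ≤ m := by simp only [m]; linarith [(j : ℕ).cast_nonneg (α := ℝ)]
  have hmu : m * u ≤ 1 := by
    have : m ≤ n := by simp only [m]; exact_mod_cast j.isLt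
    nlinarith
  have hgap : u * (m - ρ) < 1 - x := by linarith
  have hpos : 0 < u * (m - ρ) := mul_pos hu (by linarith)
  refine ⟨⟨by linarith, by linarith⟩, ?_⟩
  have hnear : ∀ i ∈ Finset.Iic j, 1 / (1 - x) ≤ poissonKernel 0 x (z i) := fun i hi =>
    inv_one_sub_le_poissonKernel (hz i) (by linarith) (by linarith)
      ((hmono (Finset.mem_Iic.1 hi)).trans (hj.trans hgap.le))
  calc 1 / u = m * (1 / (m * u)) := by field_simp
    _ ≤ m * (1 / (1 - x)) := by gcongr <;> linarith
    _ ≤ ∑ i ∈ Finset.Iic j, poissonKernel 0 x (z i) := by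
      simpa [Fin.card_Iic, m] using Finset.card_nsmul_le_sum _ _ _ hnear
    _ ≤ ∑ k, poissonKernel 0 x (z k) :=
      Finset.sum_le_sum_of_subset_of_nonneg (Finset.subset_univ _) fun k _ _ =>
        poissonKernel_nonneg (by
          rw [hz k, Complex.norm_real, Real.norm_eq_abs, abs_le]; constructor <;> linarith)

lemma sum_poissonKernel_le {n : ℕ} {z : Fin n → ℂ} (hz : ∀ k, ‖z k‖ = 1) {u ρ : ℝ} (hu₀ : 0 < u)
    (hu₁ : u ≤ 3 / 4) (hρ₀ : 0 ≤ ρ) (hρ₁ : ρ ≤ 1 / 8)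
    (hfar : ∀ k : Fin n, u * (k + 1 - ρ) < ‖1 - z k‖) {x : ℝ} (hx : x ∈ Ico (1 - ρ * u) 1) :
    x ∈ Ioo (-1) 1 ∧ ∑ k, poissonKernel 0 x (z k) ≤ 6 * ρ / u := by
  obtain ⟨hx₁, hx₂⟩ := hx
  have hρu : ρ * u ≤ 3 / 32 := by nlinarith
  have hC : 0 ≤ 2 * ρ / (u * (1 - ρ * u)) := div_nonneg (by positivity) (by nlinarith)
  refine ⟨⟨by linarith, hx₂⟩, ?_⟩
  have hterm : ∀ k : Fin n, poissonKernel 0 x (z k) ≤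
      2 * ρ / (u * (1 - ρ * u)) * (1 / ((k : ℕ) + (1 - ρ)) ^ 2) := by
    intro k
    have hk : 0 < u * (k + 1 - ρ) := mul_pos hu₀ (by linarith [(k : ℕ).cast_nonneg (α := ℝ)])
    have hzk : z k ≠ 1 := fun h => by simpa [h] using hk.trans (hfar k)
    calc poissonKernel 0 x (z k) ≤ 2 * (1 - x) / (x * ‖1 - z k‖ ^ 2) :=
          poissonKernel_le (hz k) hzk (by linarith) hx₂.le
      _ ≤ 2 * (ρ * u) / ((1 - ρ * u) * (u * (k + 1 - ρ)) ^ 2) := by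
          gcongr
          · exact mul_pos (by linarith) (pow_pos hk 2)
          · linarith
          · linarith
          · exact (hfar k).le
      _ = 2 * ρ / (u * (1 - ρ * u)) * (1 / ((k : ℕ) + (1 - ρ)) ^ 2) := by
          have h₁ : (1 : ℝ) - ρ * u ≠ 0 := by nlinarith
          have h₂ : (k : ℝ) + 1 - ρ ≠ 0 := by nlinarith
          rw [← add_sub_assoc]
          field_simp
  calc ∑ k, poissonKernel 0 x (z k)
      ≤ ∑ k : Fin n, 2 * ρ / (u * (1 - ρ * u)) * (1 / ((k : ℕ) + (1 - ρ)) ^ 2) :=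
        Finset.sum_le_sum fun k _ => hterm k
    _ = 2 * ρ / (u * (1 - ρ * u)) * ∑ j ∈ Finset.range n, 1 / ((j : ℝ) + (1 - ρ)) ^ 2 := by
        rw [← Finset.mul_sum, Fin.sum_univ_eq_sum_range (fun j => 1 / ((j : ℝ) + (1 - ρ)) ^ 2)]
    _ ≤ 2 * ρ / (u * (1 - ρ * u)) * (1 / (1 - ρ - 1 / 2)) := by
        gcongr
        exact sum_range_one_div_add_sq_le (by linarith) n
    _ ≤ 6 * ρ / u := by
        have key : 2 ≤ 6 * (1 - ρ * u) * (1 - ρ - 1 / 2) := by nlinarith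
        rw [div_mul_div_comm, mul_one, div_le_div_iff₀ (by nlinarith) hu₀]
        nlinarith [mul_nonneg (mul_nonneg hρ₀ hu₀.le) (sub_nonneg.2 key)]

theorem exists_Ico_forall_sum_poissonKernel {n : ℕ} {z : Fin n → ℂ} (hz : ∀ k, ‖z k‖ = 1)
    {u ρ : ℝ} (hu₀ : 0 < u) (hu₁ : u ≤ 3 / 4) (hnu : n * u ≤ 1) (hρ₀ : 0 ≤ ρ) (hρ₁ : ρ ≤ 1 / 8) :
    ∃ a, ∀ x ∈ Ico a (a + ρ * u), x ∈ Ioo (-1) 1 ∧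
      (1 / u ≤ ∑ k, poissonKernel 0 x (z k) ∨ ∑ k, poissonKernel 0 x (z k) ≤ 6 * ρ / u) := by
  set σ := Tuple.sort fun k => ‖1 - z k‖
  have hsum (x : ℝ) : ∑ k, poissonKernel 0 x (z (σ k)) = ∑ k, poissonKernel 0 x (z k) :=
    Equiv.sum_comp σ fun k => poissonKernel 0 x (z k)
  by_cases hnear : ∃ j : Fin n, ‖1 - z (σ j)‖ ≤ u * (j + 1 - ρ)
  · obtain ⟨j, hj⟩ := hnear
    refine ⟨1 - (j + 1) * u, fun x hx => ?_⟩
    rw [← hsum]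
    exact (one_div_le_sum_poissonKernel (fun k => hz _) (Tuple.monotone_sort fun k => ‖1 - z k‖)
      hu₀ hnu (by linarith) j hj hx).imp_right Or.inl
  · simp only [not_exists, not_le] at hnear
    refine ⟨1 - ρ * u, fun x hx => ?_⟩
    rw [sub_add_cancel] at hx
    rw [← hsum]
    exact (sum_poissonKernel_le (fun k => hz _) hu₀ hu₁ hρ₀ hρ₁ hnear hx).imp_right Or.inr

theorem stmt8 (n : ℕ) (hn : 0 < n) (z : Fin n → ℂ) (hz : ∀ k, ‖z k‖ = 1)
    (δ : ℝ) (hδ0 : 0 < δ) (hδ1 : δ < 1 / 2) :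
    ENNReal.ofReal ((3 / 32) * (1 - 2 * δ) / (1 + 2 * δ) ^ 2 / n) ≤
      volume {x : ℝ | x ∈ Icc (-1 : ℝ) 1 ∧
        δ * n ≤ |((x : ℂ) * ∑ k, 1 / ((x : ℂ) - z k)).re|} := by
  have hN : (1 : ℝ) ≤ n := by exact_mod_cast hn
  set u := 3 / (4 * (1 + 2 * δ) * n)
  set ρ := (1 - 2 * δ) / (8 * (1 + 2 * δ))
  have hu₀ : 0 < u := by positivity
  have hnu : n * u = 3 / (4 * (1 + 2 * δ)) := by simp only [u]; field_simp
  have hnu₁ : n * u ≤ 3 / 4 := by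
    rw [hnu]; exact div_le_div_of_nonneg_left (by norm_num) (by norm_num) (by linarith)
  obtain ⟨a, ha⟩ := exists_Ico_forall_sum_poissonKernel hz (ρ := ρ) hu₀ (by nlinarith)
    (by linarith) (div_nonneg (by linarith) (by positivity))
    (by rw [div_le_div_iff₀ (by positivity) (by norm_num)]; linarith)
  have hρu : ρ * u = 3 / 32 * (1 - 2 * δ) / (1 + 2 * δ) ^ 2 / n := by
    simp only [u, ρ]; field_simp; ring
  rw [← hρu, ← add_sub_cancel_left a (ρ * u), ← Real.volume_Ico]
  refine measure_mono fun x hx => ?_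
  obtain ⟨hx, hbound⟩ := ha x hx
  refine ⟨Ioo_subset_Icc_self hx, ?_⟩
  rw [re_ofReal_mul_sum_one_div_sub hz hx, le_abs']
  have h1 : (1 + 2 * δ) * n ≤ 1 / u := by
    rw [one_div_div]; nlinarith
  have h2 : 6 * ρ / u = (1 - 2 * δ) * n := by simp only [u, ρ]; field_simp; ring
  rcases hbound with h | h
  · left; linarith
  · right; linarith
end

section
/- For every positive integer n and every p > 0, the function g̃_n(x) = n·x^{n−1}/(x^n + i) satisfies ∫_{−1}^{1} |g̃_n(x)|^p dx = 2n^{p−1} ∫_0^1 (t^{1−1/n})^{p−1} (t² + 1)^{−p/2} dt ≤ C̃_p · n^{p−1}, where C̃_p = ∫_0^1 2 t^{κ} (t²+1)^{−p/2} dt and κ = min{p−1, 0}. -/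
open Real intervalIntegral

/-!
The integrand is even, so the integral over `[-1, 1]` is twice the one over `[0, 1]`.
For `x > 0` one has `x ^ (n - 1) = (x ^ n) ^ (1 - 1 / n)`, so `‖g̃_n x‖ ^ p` is
`n ^ (p - 1) · n x ^ (n - 1) · φ (x ^ n)` with
`φ t = (t ^ (1 - 1 / n)) ^ (p - 1) (t ^ 2 + 1) ^ (-p / 2)`, and the substitution `t = x ^ n`
gives the identity. For the bound, `(1 - 1 / n) (p - 1) ≥ min (p - 1) 0` and `0 < t ≤ 1` give
`t ^ ((1 - 1 / n) (p - 1)) ≤ t ^ min (p - 1) 0`, which is integrable as `min (p - 1) 0 > -1`.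
-/

open MeasureTheory Set

theorem integral_neg_self_eq_two_nsmul_of_even {E : Type*} [NormedAddCommGroup E]
    [NormedSpace ℝ E] {f : ℝ → E} (hf : ∀ x, f (-x) = f x) {a : ℝ}
    (hfi : IntervalIntegrable f volume (-a) a) :
    ∫ x in -a..a, f x = 2 • ∫ x in 0..a, f x := by
  have h_left : ∫ x in -a..0, f x = ∫ x in 0..a, f x := by
    simpa [hf] using (integral_comp_neg (a := 0) (b := a) f).symm
  rw [← integral_add_adjacent_intervals (hfi.mono_set ?_) (hfi.mono_set ?_), h_left, two_nsmul]
  · exact uIcc_subset_uIcc_left (mem_uIcc.2 (by grind))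
  · exact uIcc_subset_uIcc_right (mem_uIcc.2 (by grind))

theorem integral_deriv_pow_smul_comp_pow {E : Type*} [NormedAddCommGroup E] [NormedSpace ℝ E]
    (g : ℝ → E) (n : ℕ) {a b : ℝ} (ha : 0 ≤ a) (hab : a ≤ b) :
    ∫ x in a..b, ((n : ℝ) * x ^ (n - 1)) • g (x ^ n) = ∫ t in a ^ n..b ^ n, g t := by
  have hmono : a ^ n ≤ b ^ n := pow_le_pow_left₀ ha hab n
  rw [integral_of_le hab, integral_of_le hmono, ← integral_Icc_eq_integral_Ioc,
    ← integral_Icc_eq_integral_Ioc]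
  exact integral_Icc_deriv_smul_of_deriv_nonneg (by fun_prop) (fun x _ => hasDerivAt_pow n x)
    (fun x hx => by have := ha.trans hx.1.le; positivity) hab

theorem Complex.norm_ofReal_add_I (y : ℝ) : ‖(y : ℂ) + Complex.I‖ = √(y ^ 2 + 1) := by
  simpa using Complex.norm_add_mul_I y 1

theorem pow_sub_one_eq_pow_rpow {x : ℝ} (hx : 0 ≤ x) {n : ℕ} (hn : 0 < n) :
    x ^ (n - 1) = (x ^ n) ^ (1 - 1 / (n : ℝ)) := by
  rw [← rpow_natCast x n, ← rpow_mul hx, ← rpow_natCast, Nat.cast_sub hn]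
  congr 1
  field_simp
  simp

theorem min_le_mul_of_nonneg_of_le_one {a b : ℝ} (ha₀ : 0 ≤ a) (ha₁ : a ≤ 1) :
    min b 0 ≤ a * b := by
  rcases le_total b 0 with hb | hb
  · nlinarith [min_le_left b 0]
  · nlinarith [min_le_right b 0]

theorem intervalIntegrable_rpow_mul_sq_add_one_rpow {r q : ℝ} (hr : -1 < r) (hq : q ≤ 0)
    (a b : ℝ) : IntervalIntegrable (fun t : ℝ => t ^ r * (t ^ 2 + 1) ^ q) volume a b := by
  have hmeas : Measurable fun t : ℝ => t ^ r * (t ^ 2 + 1) ^ q := by fun_prop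
  refine (intervalIntegrable_rpow' hr).norm.mono_fun' hmeas.aestronglyMeasurable
    (ae_of_all _ fun t => ?_)
  dsimp only
  rw [norm_mul, norm_of_nonneg (by positivity : (0 : ℝ) ≤ (t ^ 2 + 1) ^ q)]
  exact mul_le_of_le_one_right (norm_nonneg _)
    (rpow_le_one_of_one_le_of_nonpos (by nlinarith) hq)

/-- The paper's `g̃_n`. -/
noncomputable def logDerivPowAddI (n : ℕ) (x : ℝ) : ℂ :=
  n * (x : ℂ) ^ (n - 1) / ((x : ℂ) ^ n + Complex.I)

theorem norm_ofReal_pow_add_I (n : ℕ) (x : ℝ) :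
    ‖(x : ℂ) ^ n + Complex.I‖ = √((x ^ n) ^ 2 + 1) := by
  rw [← Complex.ofReal_pow, Complex.norm_ofReal_add_I]

theorem ofReal_pow_add_I_ne_zero (n : ℕ) (x : ℝ) : (x : ℂ) ^ n + Complex.I ≠ 0 := by
  rw [← norm_ne_zero_iff, norm_ofReal_pow_add_I]
  positivity

theorem norm_logDerivPowAddI (n : ℕ) (x : ℝ) :
    ‖logDerivPowAddI n x‖ = n * |x| ^ (n - 1) / √((x ^ n) ^ 2 + 1) := by
  rw [logDerivPowAddI, norm_div, norm_mul, norm_pow, Complex.norm_natCast, Complex.norm_real,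
    norm_eq_abs, norm_ofReal_pow_add_I]

theorem norm_logDerivPowAddI_neg (n : ℕ) (x : ℝ) :
    ‖logDerivPowAddI n (-x)‖ = ‖logDerivPowAddI n x‖ := by
  rw [norm_logDerivPowAddI, norm_logDerivPowAddI, abs_neg, ← pow_mul, ← pow_mul,
    (even_two.mul_left n).neg_pow]

theorem continuous_logDerivPowAddI (n : ℕ) : Continuous (logDerivPowAddI n) :=
  Continuous.div (by fun_prop) (by fun_prop) (ofReal_pow_add_I_ne_zero n)

theorem norm_logDerivPowAddI_rpow_of_pos {n : ℕ} (hn : 0 < n) (p : ℝ) {x : ℝ} (hx : 0 < x) :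
    ‖logDerivPowAddI n x‖ ^ p = (n : ℝ) ^ (p - 1) * ((n * x ^ (n - 1)) *
      (((x ^ n) ^ (1 - 1 / (n : ℝ))) ^ (p - 1) * ((x ^ n) ^ 2 + 1) ^ (-p / 2))) := by
  rw [norm_logDerivPowAddI, abs_of_pos hx, pow_sub_one_eq_pow_rpow hx.le hn]
  set v := (x ^ n) ^ (1 - 1 / (n : ℝ))
  set s := (x ^ n) ^ 2 + 1
  have hv : 0 < v := by positivity
  have hs : 0 < s := by positivity
  have hnv : 0 < n * v := by positivity
  calc (n * v / √s) ^ p = (n * v) ^ p * s ^ (-p / 2) := by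
        rw [div_rpow hnv.le (sqrt_nonneg s), sqrt_eq_rpow, ← rpow_mul hs.le, div_eq_mul_inv,
          ← rpow_neg hs.le]
        ring_nf
    _ = (n * v) ^ (p - 1) * (n * v) * s ^ (-p / 2) := by
        rw [rpow_sub_one hnv.ne', div_mul_cancel₀ _ hnv.ne']
    _ = _ := by
        rw [mul_rpow (Nat.cast_nonneg n) hv.le]
        ring

theorem integral_norm_logDerivPowAddI_rpow {n : ℕ} (hn : 0 < n) (p : ℝ) :
    ∫ x in (0 : ℝ)..1, ‖logDerivPowAddI n x‖ ^ p = (n : ℝ) ^ (p - 1) *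
      ∫ t in (0 : ℝ)..1, (t ^ (1 - 1 / (n : ℝ))) ^ (p - 1) * (t ^ 2 + 1) ^ (-p / 2) := by
  have hsubst := integral_deriv_pow_smul_comp_pow
    (fun t : ℝ => (t ^ (1 - 1 / (n : ℝ))) ^ (p - 1) * (t ^ 2 + 1) ^ (-p / 2))
    n le_rfl zero_le_one
  rw [zero_pow hn.ne', one_pow] at hsubst
  rw [← hsubst, ← intervalIntegral.integral_const_mul]
  refine integral_congr_ae (ae_of_all _ fun x hx => ?_)
  rw [uIoc_of_le zero_le_one] at hx
  exact norm_logDerivPowAddI_rpow_of_pos hn p hx.1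

theorem integral_rpow_rpow_mul_le_integral_rpow_min_mul {a p : ℝ} (ha₀ : 0 ≤ a)
    (ha₁ : a ≤ 1) (hp : 0 < p) :
    ∫ t in (0 : ℝ)..1, (t ^ a) ^ (p - 1) * (t ^ 2 + 1) ^ (-p / 2) ≤
      ∫ t in (0 : ℝ)..1, t ^ min (p - 1) 0 * (t ^ 2 + 1) ^ (-p / 2) := by
  have hM := intervalIntegrable_rpow_mul_sq_add_one_rpow (r := min (p - 1) 0) (q := -p / 2)
    (lt_min (by linarith) (by norm_num)) (by linarith) 0 1
  have hle : ∀ t ∈ Ioc (0 : ℝ) 1, (t ^ a) ^ (p - 1) * (t ^ 2 + 1) ^ (-p / 2) ≤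
      t ^ min (p - 1) 0 * (t ^ 2 + 1) ^ (-p / 2) := fun t ht => by
    rw [← rpow_mul ht.1.le]
    exact mul_le_mul_of_nonneg_right
      (rpow_le_rpow_of_exponent_ge ht.1 ht.2 (min_le_mul_of_nonneg_of_le_one ha₀ ha₁))
      (by positivity)
  have hg : IntervalIntegrable (fun t : ℝ => (t ^ a) ^ (p - 1) * (t ^ 2 + 1) ^ (-p / 2))
      volume 0 1 := by
    refine hM.mono_fun' (by fun_prop : Measurable _).aestronglyMeasurable ?_
    rw [uIoc_of_le zero_le_one]
    refine (ae_restrict_mem measurableSet_Ioc).mono fun t ht => ?_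
    dsimp only
    rw [norm_of_nonneg (by have := ht.1.le; positivity)]
    exact hle t ht
  exact integral_mono_on_of_le_Ioo zero_le_one hg hM fun t ht => hle t (Ioo_subset_Ioc_self ht)

theorem stmt13 (n : ℕ) (hn : 0 < n) (p : ℝ) (hp : 0 < p) :
    (∫ x in (-1 : ℝ)..1,
        ‖(n : ℂ) * (x : ℂ) ^ (n - 1) / ((x : ℂ) ^ n + Complex.I)‖ ^ p) =
      2 * (n : ℝ) ^ (p - 1) *
        ∫ t in (0 : ℝ)..1, (t ^ (1 - 1 / (n : ℝ))) ^ (p - 1) * (t ^ 2 + 1) ^ (-p / 2) ∧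
    (∫ x in (-1 : ℝ)..1,
        ‖(n : ℂ) * (x : ℂ) ^ (n - 1) / ((x : ℂ) ^ n + Complex.I)‖ ^ p) ≤
      (∫ t in (0 : ℝ)..1, 2 * t ^ min (p - 1) 0 * (t ^ 2 + 1) ^ (-p / 2)) *
        (n : ℝ) ^ (p - 1) := by
  have hcont : Continuous fun x => ‖logDerivPowAddI n x‖ ^ p :=
    (continuous_logDerivPowAddI n).norm.rpow_const fun _ => Or.inr hp.le
  have heq : ∫ x in (-1 : ℝ)..1, ‖logDerivPowAddI n x‖ ^ p = 2 * (n : ℝ) ^ (p - 1) *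
      ∫ t in (0 : ℝ)..1, (t ^ (1 - 1 / (n : ℝ))) ^ (p - 1) * (t ^ 2 + 1) ^ (-p / 2) := by
    rw [integral_neg_self_eq_two_nsmul_of_even (fun x => by rw [norm_logDerivPowAddI_neg])
      (hcont.intervalIntegrable _ _), integral_norm_logDerivPowAddI_rpow hn, nsmul_eq_mul]
    push_cast
    ring
  refine ⟨heq, heq.trans_le ?_⟩
  have hn₁ : (1 : ℝ) ≤ n := by exact_mod_cast hn
  have hbound := integral_rpow_rpow_mul_le_integral_rpow_min_mul (a := 1 - 1 / (n : ℝ))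
    (sub_nonneg.2 (div_le_one_of_le₀ hn₁ (by positivity))) (sub_le_self _ (by positivity)) hp
  have htwo : ∫ t in (0 : ℝ)..1, 2 * t ^ min (p - 1) 0 * (t ^ 2 + 1) ^ (-p / 2) =
      2 * ∫ t in (0 : ℝ)..1, t ^ min (p - 1) 0 * (t ^ 2 + 1) ^ (-p / 2) := by
    simp_rw [mul_assoc (2 : ℝ), intervalIntegral.integral_const_mul]
  rw [htwo]
  nlinarith [rpow_nonneg (Nat.cast_nonneg n : (0 : ℝ) ≤ n) (p - 1)]
end

section
/- For every positive integer n and every δ with 0 < δ < 1/2, the function g̃_n(x) = n·x^{n−1}/(x^n + i) satisfies Re(x·g̃_n(x)) = n·x^{2n}/(x^{2n} + 1) for real x, and the set E_δ(g̃_n) = {x ∈ [−1,1] : |Re(x·g̃_n(x))| ≥ δn} = {x ∈ [−1,1] : |x| ≥ (1/δ − 1)^{−1/(2n)}} has Lebesgue measure strictly less than ln(1/δ − 1)/n. -/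
open MeasureTheory Set Real

/-!
With y = xⁿ we have x·g̃ₙ(x) = n·y/(y + i), whose real part n·y²/(y² + 1) is increasing in
y² = x²ⁿ. So the level set is [-1, 1] with the interval (-c, c), c = (1/δ - 1)^(-1/(2n)),
removed, and has measure 2(1 - c); the bound 1 - c < ln(1/δ - 1)/(2n) is eˢ > 1 + s at
s = -ln(1/δ - 1)/(2n).
-/

theorem Complex.re_ofReal_div_ofReal_add_I (y : ℝ) :
    ((y : ℂ) / (y + Complex.I)).re = y ^ 2 / (y ^ 2 + 1) := by
  simp [Complex.div_re, Complex.normSq_apply, sq]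

theorem re_ofReal_mul_logDeriv_pow_add_I (n : ℕ) (x : ℝ) :
    ((x : ℂ) * ((n : ℂ) * (x : ℂ) ^ (n - 1) / ((x : ℂ) ^ n + Complex.I))).re =
      n * x ^ (2 * n) / (x ^ (2 * n) + 1) := by
  have hx : (x : ℂ) * ((n : ℂ) * (x : ℂ) ^ (n - 1) / ((x : ℂ) ^ n + Complex.I)) =
      ((n : ℝ) : ℂ) * (((x ^ n : ℝ) : ℂ) / ((x ^ n : ℝ) + Complex.I)) := by
    rcases n with _ | n
    · simp
    · push_cast
      ring
  rw [hx, Complex.re_ofReal_mul, Complex.re_ofReal_div_ofReal_add_I, pow_mul', mul_div_assoc]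

theorem le_div_add_one_iff_inv_le {δ u : ℝ} (hδ0 : 0 < δ) (hδ1 : δ < 1) (hu : 0 ≤ u) :
    δ ≤ u / (u + 1) ↔ (1 / δ - 1)⁻¹ ≤ u := by
  have hinv : (1 / δ - 1)⁻¹ = δ / (1 - δ) := by
    field_simp
  rw [hinv, le_div_iff₀ (by linarith), div_le_iff₀ (by linarith)]
  constructor <;> intro h <;> linarith

theorem rpow_neg_inv_le_iff_inv_le_pow {a y : ℝ} (ha : 0 < a) (hy : 0 ≤ y) {m : ℕ}
    (hm : m ≠ 0) :
    a ^ (-1 / m : ℝ) ≤ y ↔ a⁻¹ ≤ y ^ m := by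
  rw [neg_div, one_div, Real.rpow_neg ha.le, ← Real.inv_rpow ha.le,
    Real.rpow_inv_le_iff_of_pos (inv_nonneg.2 ha.le) hy (by positivity), Real.rpow_natCast]

theorem Real.one_sub_mul_log_lt_rpow_neg {a t : ℝ} (ha : 0 < a) (ha1 : a ≠ 1) (ht : t ≠ 0) :
    1 - t * log a < a ^ (-t) := by
  have h := Real.add_one_lt_exp
    (mul_ne_zero (neg_ne_zero.2 ht) (Real.log_ne_zero_of_pos_of_ne_one ha ha1))
  rw [Real.rpow_def_of_pos ha, mul_comm (log a)]
  linarith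

theorem Real.volume_mem_Icc_neg_and_le_abs {r c : ℝ} (hc : 0 ≤ c) (hcr : c ≤ r) :
    volume {x : ℝ | x ∈ Icc (-r) r ∧ c ≤ |x|} = ENNReal.ofReal (2 * (r - c)) := by
  have hset : {x : ℝ | x ∈ Icc (-r) r ∧ c ≤ |x|} = Icc (-r) r \ Ioo (-c) c := by
    ext x
    simp only [mem_ofPred_eq, mem_sdiff, mem_Ioo, ← abs_lt, not_lt]
  have hsub : Ioo (-c) c ⊆ Icc (-r) r :=
    Ioo_subset_Icc_self.trans (Icc_subset_Icc (by linarith) hcr)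
  rw [hset, measure_sdiff hsub measurableSet_Ioo.nullMeasurableSet measure_Ioo_lt_top.ne,
    Real.volume_Icc, Real.volume_Ioo, ← ENNReal.ofReal_sub _ (by linarith)]
  ring_nf

theorem mul_le_abs_mul_pow_div_iff {n : ℕ} (hn : 0 < n) {δ : ℝ} (hδ0 : 0 < δ) (hδ1 : δ < 1)
    (x : ℝ) :
    δ * n ≤ |n * x ^ (2 * n) / (x ^ (2 * n) + 1)| ↔
      (1 / δ - 1) ^ (-(1 : ℝ) / (2 * n)) ≤ |x| := by
  have hu : 0 ≤ x ^ (2 * n) := (even_two_mul n).pow_nonneg x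
  have ha : 0 < 1 / δ - 1 := by rw [sub_pos, lt_div_iff₀ hδ0]; linarith
  rw [abs_of_nonneg (by positivity), mul_div_assoc, mul_comm δ,
    mul_le_mul_iff_right₀ (by exact_mod_cast hn), le_div_add_one_iff_inv_le hδ0 hδ1 hu,
    ← (even_two_mul n).pow_abs, ← rpow_neg_inv_le_iff_inv_le_pow ha (abs_nonneg x) (by omega),
    Nat.cast_mul, Nat.cast_ofNat]

theorem stmt14 (n : ℕ) (hn : 0 < n) (δ : ℝ) (hδ0 : 0 < δ) (hδ1 : δ < 1 / 2) :
    (∀ x : ℝ, ((x : ℂ) * ((n : ℂ) * (x : ℂ) ^ (n - 1) / ((x : ℂ) ^ n + Complex.I))).re =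
        n * x ^ (2 * n) / (x ^ (2 * n) + 1)) ∧
    {x : ℝ | x ∈ Icc (-1 : ℝ) 1 ∧
        δ * n ≤ |((x : ℂ) * ((n : ℂ) * (x : ℂ) ^ (n - 1) / ((x : ℂ) ^ n + Complex.I))).re|} =
      {x : ℝ | x ∈ Icc (-1 : ℝ) 1 ∧ (1 / δ - 1) ^ (-(1 : ℝ) / (2 * n)) ≤ |x|} ∧
    volume {x : ℝ | x ∈ Icc (-1 : ℝ) 1 ∧
        δ * n ≤ |((x : ℂ) * ((n : ℂ) * (x : ℂ) ^ (n - 1) / ((x : ℂ) ^ n + Complex.I))).re|} <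
      ENNReal.ofReal (Real.log (1 / δ - 1) / n) := by
  have hset : {x : ℝ | x ∈ Icc (-1 : ℝ) 1 ∧
      δ * n ≤ |((x : ℂ) * ((n : ℂ) * (x : ℂ) ^ (n - 1) / ((x : ℂ) ^ n + Complex.I))).re|} =
      {x : ℝ | x ∈ Icc (-1 : ℝ) 1 ∧ (1 / δ - 1) ^ (-(1 : ℝ) / (2 * n)) ≤ |x|} := by
    ext x
    simp only [mem_ofPred_eq, re_ofReal_mul_logDeriv_pow_add_I,
      mul_le_abs_mul_pow_div_iff hn hδ0 (by linarith)]
  refine ⟨re_ofReal_mul_logDeriv_pow_add_I n, hset, ?_⟩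
  set a := 1 / δ - 1
  have ha : 1 < a := by unfold a; rw [lt_sub_iff_add_lt, lt_div_iff₀ hδ0]; linarith
  have hc0 : 0 ≤ a ^ (-(1 : ℝ) / (2 * n)) := by positivity
  have hc1 : a ^ (-(1 : ℝ) / (2 * n)) ≤ 1 :=
    Real.rpow_le_one_of_one_le_of_nonpos ha.le
      (div_nonpos_of_nonpos_of_nonneg (by norm_num) (by positivity))
  have hbound := Real.one_sub_mul_log_lt_rpow_neg (t := 1 / (2 * n)) (by linarith) ha.ne'
    (by positivity)
  rw [← neg_div] at hbound
  rw [hset, Real.volume_mem_Icc_neg_and_le_abs hc0 hc1,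
    ENNReal.ofReal_lt_ofReal_iff (div_pos (log_pos ha) (by exact_mod_cast hn))]
  calc 2 * (1 - a ^ (-(1 : ℝ) / (2 * n))) < 2 * (1 / (2 * n) * log a) := by linarith
    _ = log a / n := by field_simp
end

section
/- Let p_n be a complex polynomial of degree n ≥ 1 all of whose zeros lie in the closed unit disk |z| ≤ 1. Then ‖p_n'‖_{C[−1,1]} ≥ (1/4)·‖p_n‖_{C[−1,1]}, where ‖f‖_{C[−1,1]} = max_{x∈[−1,1]} |f(x)|. -/
open Polynomial Set

/-!
For `‖a‖ = 1` and `‖z‖ ≤ 1`, `a / (a - z) = 1 / (1 - z/a)` has real part at least `1/2`, since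
`w ↦ 1 / (1 - w)` maps the closed unit disk (minus `1`) into the half-plane `Re ≥ 1/2`. Summing over
the zeros, `Re (a p'(a) / p(a)) ≥ n / 2`, so `‖p(1)‖ ≤ (2/n) ‖p'(1)‖ ≤ 2 ‖p'‖`. The mean value theorem
on `[-1, 1]` adds at most `2 ‖p'‖`, giving `‖p‖ ≤ 4 ‖p'‖`.
-/

theorem Complex.one_half_le_re_inv_one_sub {z : ℂ} (hz : ‖z‖ ≤ 1) (hz1 : z ≠ 1) :
    1 / 2 ≤ (1 - z)⁻¹.re := by
  have hpos : 0 < Complex.normSq (1 - z) := Complex.normSq_pos.mpr (sub_ne_zero.mpr hz1.symm)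
  have hnormSq : Complex.normSq z ≤ 1 := by
    rw [Complex.normSq_eq_norm_sq]; exact pow_le_one₀ (norm_nonneg z) hz
  rw [Complex.inv_re, le_div_iff₀ hpos, Complex.normSq_sub, Complex.normSq_one]
  simp only [one_mul, Complex.sub_re, Complex.one_re, Complex.conj_re]
  nlinarith

theorem Complex.one_half_le_re_div_sub {a z : ℂ} (ha : ‖a‖ = 1) (hz : ‖z‖ ≤ 1) (hza : z ≠ a) :
    1 / 2 ≤ (a / (a - z)).re := by
  have ha0 : a ≠ 0 := by rintro rfl; simp at ha
  have hdiv : a / (a - z) = (1 - z / a)⁻¹ := by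
    rw [one_sub_div ha0, inv_div]
  rw [hdiv]
  refine Complex.one_half_le_re_inv_one_sub ?_ ?_
  · rwa [norm_div, ha, div_one]
  · rwa [Ne, div_eq_one_iff_eq ha0]

theorem Polynomial.natDegree_div_two_le_re_mul_eval_derivative_div_eval {p : ℂ[X]}
    (hroots : ∀ w : ℂ, p.eval w = 0 → ‖w‖ ≤ 1) {a : ℂ} (ha : ‖a‖ = 1) (hpa : p.eval a ≠ 0) :
    (p.natDegree : ℝ) / 2 ≤ (a * (p.derivative.eval a / p.eval a)).re := by
  have hsplit := IsAlgClosed.splits p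
  have hp0 : p ≠ 0 := by rintro rfl; simp at hpa
  calc (p.natDegree : ℝ) / 2 = (p.roots.map fun _ => (1 / 2 : ℝ)).sum := by
        simp [hsplit.natDegree_eq_card_roots, div_eq_mul_inv]
    _ ≤ (p.roots.map fun z => (a / (a - z)).re).sum := by
        refine Multiset.sum_map_le_sum_map _ _ fun z hz => ?_
        have hz0 : p.eval z = 0 := (mem_roots hp0).mp hz
        exact Complex.one_half_le_re_div_sub ha (hroots z hz0) (by rintro rfl; exact hpa hz0)
    _ = (a * (p.derivative.eval a / p.eval a)).re := by
        rw [hsplit.eval_derivative_div_eval_of_ne_zero hpa, ← Multiset.sum_map_mul_left,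
          ← Complex.reCLM_apply, map_multiset_sum, Multiset.map_map]
        simp only [Function.comp_def, Complex.reCLM_apply, mul_one_div]

theorem Polynomial.natDegree_mul_norm_eval_le {p : ℂ[X]}
    (hroots : ∀ w : ℂ, p.eval w = 0 → ‖w‖ ≤ 1) {a : ℂ} (ha : ‖a‖ = 1) :
    p.natDegree * ‖p.eval a‖ ≤ 2 * ‖p.derivative.eval a‖ := by
  rcases eq_or_ne (p.eval a) 0 with hpa | hpa
  · rw [hpa, norm_zero, mul_zero]; positivity
  have hre := natDegree_div_two_le_re_mul_eval_derivative_div_eval hroots ha hpa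
  have hnorm := Complex.re_le_norm (a * (p.derivative.eval a / p.eval a))
  rw [norm_mul, ha, one_mul, norm_div, le_div_iff₀ (norm_pos_iff.mpr hpa)] at hnorm
  nlinarith [norm_nonneg (p.eval a)]

theorem Polynomial.norm_eval_ofReal_le_norm_eval_one_add {p : ℂ[X]} {D : ℝ}
    (hD : ∀ t ∈ Icc (-1 : ℝ) 1, ‖p.derivative.eval (t : ℂ)‖ ≤ D) {x : ℝ} (hx : x ∈ Icc (-1) 1) :
    ‖p.eval (x : ℂ)‖ ≤ ‖p.eval 1‖ + 2 * D := by
  have h1 : (1 : ℝ) ∈ Icc (-1 : ℝ) 1 := right_mem_Icc.mpr (by norm_num)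
  have hmvt := (convex_Icc (-1 : ℝ) 1).norm_image_sub_le_of_norm_hasDerivWithin_le
    (f := fun t : ℝ => p.eval (t : ℂ)) (f' := fun t : ℝ => p.derivative.eval (t : ℂ))
    (fun t _ => ((p.hasDerivAt (t : ℂ)).comp_ofReal).hasDerivWithinAt) hD hx h1
  have hdist : ‖(1 : ℝ) - x‖ ≤ 2 := by
    rw [Real.norm_eq_abs, abs_le]; constructor <;> linarith [hx.1, hx.2]
  have hD0 : 0 ≤ D := (norm_nonneg _).trans (hD 1 h1)
  calc ‖p.eval (x : ℂ)‖ ≤ ‖p.eval 1‖ + ‖p.eval ((1 : ℝ) : ℂ) - p.eval (x : ℂ)‖ := by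
        simpa [norm_sub_rev] using norm_le_norm_add_norm_sub' (p.eval (x : ℂ)) (p.eval 1)
    _ ≤ ‖p.eval 1‖ + 2 * D := by
        gcongr
        exact hmvt.trans (by nlinarith)

theorem stmt17 (n : ℕ) (hn : 1 ≤ n) (p : Polynomial ℂ) (hdeg : p.natDegree = n)
    (hroots : ∀ w : ℂ, p.eval w = 0 → ‖w‖ ≤ 1) :
    (1 / 4) * sSup ((fun x : ℝ => ‖p.eval (x : ℂ)‖) '' Icc (-1) 1) ≤
      sSup ((fun x : ℝ => ‖p.derivative.eval (x : ℂ)‖) '' Icc (-1) 1) := by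
  set D := sSup ((fun x : ℝ => ‖p.derivative.eval (x : ℂ)‖) '' Icc (-1) 1)
  have hD : ∀ t ∈ Icc (-1 : ℝ) 1, ‖p.derivative.eval (t : ℂ)‖ ≤ D := fun t ht =>
    le_csSup (isCompact_Icc.image (by fun_prop)).bddAbove (mem_image_of_mem _ ht)
  have hp1 : ‖p.eval 1‖ ≤ 2 * D := by
    have hdeg1 : (1 : ℝ) ≤ p.natDegree := by exact_mod_cast hdeg ▸ hn
    calc ‖p.eval 1‖ ≤ p.natDegree * ‖p.eval 1‖ := le_mul_of_one_le_left (norm_nonneg _) hdeg1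
      _ ≤ 2 * ‖p.derivative.eval 1‖ := p.natDegree_mul_norm_eval_le hroots norm_one
      _ ≤ 2 * D := by simpa using hD 1 (right_mem_Icc.mpr (by norm_num))
  have hpx : ∀ x ∈ Icc (-1 : ℝ) 1, ‖p.eval (x : ℂ)‖ ≤ 4 * D := fun x hx => by
    linarith [p.norm_eval_ofReal_le_norm_eval_one_add hD hx]
  rw [one_div, inv_mul_le_iff₀ (by norm_num)]
  exact csSup_le (nonempty_Icc.mpr (by norm_num) |>.image _) (forall_mem_image.mpr hpx)
end
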